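/- The number 107 is the smallest unstable positive integer other than 1: 107 is unstable, and every integer n with 1 < n < 107 is stable. -/

import Mathlib

/-!
Let `L n = ⌈3 log₃ n⌉ + e s`, where `s` is the part of `n` prime to `3` and the correction
`e s ∈ {0, 1, 2}` is `0` on the "tight" numbers (nineteen small ones and `3 ^ k + 1`, `k ≥ 4`),
`2` on thirteen numbers below `107`, and `1` otherwise. A case analysis on the `3`-free parts
shows `L (a * b) ≤ L a + L b` and `L (a + b) ≤ L a + L b` (counting `L 1` as `1` in sums), so
`L n ≤ ‖n‖` by induction on representations. As `L (3 ^ k n) = 3 k + L n` while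
`‖3 ^ k n‖ ≤ 3 k + ‖n‖`, every `n` with `‖n‖ = L n` is stable. For `3 ≤ n ≤ 106` a finite check
writes `L n` as `L (n - 1) + 1` or `L d + L (n / d)`, so `‖n‖ = L n` on `[2, 106]`. Finally `107`
is prime, and `L` on the summands of an optimal sum gives `‖107‖ ≥ 16`, whereas
`321 = 1 + 2 ^ 6 * 5` gives `‖321‖ ≤ 18`.
-/

/-- `CanWrite n k` means the positive integer `n` can be written using exactly `k` ones
combined by addition and multiplication. -/
inductive CanWrite : ℕ → ℕ → Prop
  | one : CanWrite 1 1
  | add {a b j k : ℕ} : CanWrite a j → CanWrite b k → CanWrite (a + b) (j + k)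
  | mul {a b j k : ℕ} : CanWrite a j → CanWrite b k → CanWrite (a * b) (j + k)

/-- The integer complexity `‖n‖`: the least number of ones needed to write `n`. -/
noncomputable def cpx (n : ℕ) : ℕ := sInf {k | CanWrite n k}

/-- The defect `δ(n) = ‖n‖ - 3 log₃ n`. -/
noncomputable def defect (n : ℕ) : ℝ := (cpx n : ℝ) - 3 * Real.logb 3 n

/-- `n` is stable if `‖3^k n‖ = 3k + ‖n‖` for all `k ≥ 0`. -/
def Stable (n : ℕ) : Prop := ∀ k : ℕ, cpx (3 ^ k * n) = 3 * k + cpx n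

/-- The stabilization length `K(n)`: the least `k` such that `3^k n` is stable. -/
noncomputable def stabLen (n : ℕ) : ℕ := sInf {k | Stable (3 ^ k * n)}

/-- The stable complexity `‖n‖_st`: equal to `‖3^k n‖ - 3k` for any `k` with `3^k n` stable. -/
noncomputable def stableCpx (n : ℕ) : ℕ :=
  sInf {m | ∃ k : ℕ, Stable (3 ^ k * n) ∧ cpx (3 ^ k * n) = m + 3 * k}

/-- The stable defect `δ_st(n) = ‖n‖_st - 3 log₃ n`. -/
noncomputable def stableDefect (n : ℕ) : ℝ := (stableCpx n : ℝ) - 3 * Real.logb 3 n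

lemma CanWrite.one_le_left {n k : ℕ} (h : CanWrite n k) : 1 ≤ n := by
  induction h with
  | one => rfl
  | add _ _ iha _ => omega
  | mul _ _ iha ihb => exact Nat.one_le_iff_ne_zero.2 (Nat.mul_ne_zero (by omega) (by omega))

lemma CanWrite.one_le_right {n k : ℕ} (h : CanWrite n k) : 1 ≤ k := by
  induction h <;> omega

lemma canWrite_self {n : ℕ} (hn : 1 ≤ n) : CanWrite n n := by
  induction n, hn using Nat.le_induction with
  | base => exact .one
  | succ n _ ih => exact .add ih .one

lemma cpx_le {n k : ℕ} (h : CanWrite n k) : cpx n ≤ k := Nat.sInf_le h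

lemma canWrite_cpx {n : ℕ} (hn : 1 ≤ n) : CanWrite n (cpx n) := Nat.sInf_mem ⟨n, canWrite_self hn⟩

lemma one_le_cpx {n : ℕ} (hn : 1 ≤ n) : 1 ≤ cpx n := (canWrite_cpx hn).one_le_right

lemma cpx_add_le {a b : ℕ} (ha : 1 ≤ a) (hb : 1 ≤ b) : cpx (a + b) ≤ cpx a + cpx b :=
  cpx_le (.add (canWrite_cpx ha) (canWrite_cpx hb))

lemma cpx_mul_le {a b : ℕ} (ha : 1 ≤ a) (hb : 1 ≤ b) : cpx (a * b) ≤ cpx a + cpx b :=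
  cpx_le (.mul (canWrite_cpx ha) (canWrite_cpx hb))

lemma cpx_three : cpx 3 ≤ 3 := cpx_le (canWrite_self (by norm_num))

lemma cpx_three_pow_mul_le {n : ℕ} (hn : 1 ≤ n) (k : ℕ) : cpx (3 ^ k * n) ≤ 3 * k + cpx n := by
  induction k with
  | zero => simp
  | succ k ih =>
    have h := cpx_mul_le (a := 3) (b := 3 ^ k * n) (by norm_num) (Nat.mul_pos (by positivity) hn)
    rw [← mul_assoc, ← pow_succ'] at h
    linarith [cpx_three]

lemma exists_cpx_eq_add_or_mul {n : ℕ} (hn : 2 ≤ n) :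
    ∃ a b, 1 ≤ a ∧ 1 ≤ b ∧ (a + b = n ∨ (2 ≤ a ∧ 2 ≤ b ∧ a * b = n)) ∧
      cpx n = cpx a + cpx b := by
  have h := canWrite_cpx (n := n) (by omega)
  generalize hk : cpx n = k at h
  cases h with
  | one => omega
  | @add a b j k ha hb =>
    refine ⟨a, b, ha.one_le_left, hb.one_le_left, .inl rfl, le_antisymm ?_ ?_⟩
    · rw [← hk]; exact cpx_add_le ha.one_le_left hb.one_le_left
    · exact add_le_add (cpx_le ha) (cpx_le hb)
  | @mul a b j k ha hb =>
    have ha1 := ha.one_le_left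
    have hb1 := hb.one_le_left
    have hj := ha.one_le_right
    have hk' := hb.one_le_right
    have h2a : 2 ≤ a := by
      by_contra h1
      obtain rfl : a = 1 := by omega
      have := cpx_le hb
      simp only [one_mul] at hk
      omega
    have h2b : 2 ≤ b := by
      by_contra h1
      obtain rfl : b = 1 := by omega
      have := cpx_le ha
      simp only [mul_one] at hk
      omega
    refine ⟨a, b, ha1, hb1, .inr ⟨h2a, h2b, rfl⟩, le_antisymm ?_ ?_⟩
    · rw [← hk]; exact cpx_mul_le ha1 hb1
    · exact add_le_add (cpx_le ha) (cpx_le hb)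

/-- `cubeLog n = ⌈3 log₃ n⌉`, the least `t` with `n ^ 3 ≤ 3 ^ t`. -/
def cubeLog (n : ℕ) : ℕ := Nat.clog 3 (n ^ 3)

lemma cubeLog_le_iff {n t : ℕ} : cubeLog n ≤ t ↔ n ^ 3 ≤ 3 ^ t :=
  Nat.clog_le_iff_le_pow (by norm_num)

lemma lt_cubeLog_iff {n t : ℕ} : t < cubeLog n ↔ 3 ^ t < n ^ 3 :=
  Nat.lt_clog_iff_pow_lt (by norm_num)

lemma cube_le_three_pow_cubeLog (n : ℕ) : n ^ 3 ≤ 3 ^ cubeLog n := cubeLog_le_iff.1 le_rfl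

lemma three_pow_cubeLog_lt {n : ℕ} (hn : 1 ≤ n) : 3 ^ cubeLog n < 3 * n ^ 3 := by
  rcases Nat.eq_zero_or_pos (cubeLog n) with h | h
  · rw [h]
    have : 1 ≤ n ^ 3 := Nat.one_le_pow _ _ hn
    omega
  · obtain ⟨c, hc⟩ : ∃ c, cubeLog n = c + 1 := ⟨_, (Nat.succ_pred_eq_of_pos h).symm⟩
    have : 3 ^ c < n ^ 3 := lt_cubeLog_iff.1 (by omega)
    rw [hc, pow_succ]
    omega

lemma cubeLog_mono {m n : ℕ} (h : m ≤ n) : cubeLog m ≤ cubeLog n :=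
  Nat.clog_mono_right 3 (Nat.pow_le_pow_left h 3)

lemma cubeLog_le_add_of_cube_le {m n c : ℕ} (h : m ^ 3 ≤ 3 ^ c * n ^ 3) :
    cubeLog m ≤ cubeLog n + c := by
  rw [cubeLog_le_iff, pow_add, mul_comm]
  exact h.trans (Nat.mul_le_mul_left _ (cube_le_three_pow_cubeLog n))

lemma add_le_cubeLog_of_cube_le {m n c : ℕ} (hn : 1 ≤ n) (h : 3 ^ c * n ^ 3 ≤ m ^ 3) :
    cubeLog n + c ≤ cubeLog m := by
  have key : 3 ^ (cubeLog n + c) < 3 ^ (cubeLog m + 1) := by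
    calc 3 ^ (cubeLog n + c) = 3 ^ c * 3 ^ cubeLog n := by rw [pow_add, mul_comm]
      _ < 3 ^ c * (3 * n ^ 3) := Nat.mul_lt_mul_of_pos_left (three_pow_cubeLog_lt hn) (by positivity)
      _ ≤ 3 * m ^ 3 := by rw [mul_left_comm]; exact Nat.mul_le_mul_left 3 h
      _ ≤ 3 ^ (cubeLog m + 1) :=
        (Nat.mul_le_mul_left 3 (cube_le_three_pow_cubeLog m)).trans_eq (by ring)
  have := (Nat.pow_lt_pow_iff_right (by norm_num)).1 key
  omega

lemma cubeLog_three_pow_mul {n : ℕ} (hn : 1 ≤ n) (k : ℕ) :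
    cubeLog (3 ^ k * n) = 3 * k + cubeLog n := by
  have h : (3 ^ k * n) ^ 3 = 3 ^ (3 * k) * n ^ 3 := by ring
  apply le_antisymm
  · rw [add_comm]; exact cubeLog_le_add_of_cube_le h.le
  · rw [add_comm]; exact add_le_cubeLog_of_cube_le hn h.ge

lemma cubeLog_one : cubeLog 1 = 0 := by decide

lemma cubeLog_three_pow (k : ℕ) : cubeLog (3 ^ k) = 3 * k := by
  simpa [cubeLog_one] using cubeLog_three_pow_mul le_rfl k

lemma cubeLog_mul_le (m n : ℕ) : cubeLog (m * n) ≤ cubeLog m + cubeLog n := by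
  rw [cubeLog_le_iff, mul_pow, pow_add]
  exact Nat.mul_le_mul (cube_le_three_pow_cubeLog m) (cube_le_three_pow_cubeLog n)

lemma cubeLog_succ_le {n : ℕ} (hn : 2 ≤ n) : cubeLog (n + 1) ≤ cubeLog n + 1 := by
  rcases hn.eq_or_lt with rfl | hn
  · decide
  · exact cubeLog_le_add_of_cube_le (by nlinarith [sq_nonneg n])

lemma cubeLog_add_two_le {n : ℕ} (hn : 2 ≤ n) : cubeLog (n + 2) ≤ cubeLog n + 2 :=
  cubeLog_le_add_of_cube_le (by nlinarith [sq_nonneg n])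

lemma cubeLog_add_two_le_succ {n : ℕ} (hn : 5 ≤ n) : cubeLog (n + 2) ≤ cubeLog n + 1 :=
  cubeLog_le_add_of_cube_le (by nlinarith [sq_nonneg n])

lemma cubeLog_add_add_one_le {a b : ℕ} (ha : 3 ≤ a) (hb : 3 ≤ b) :
    cubeLog (a + b) + 1 ≤ cubeLog a + cubeLog b := by
  have h : 3 * (a + b) ≤ 2 * (a * b) := by nlinarith
  have : 3 ^ 1 * (a + b) ^ 3 ≤ (a * b) ^ 3 := by
    have := Nat.pow_le_pow_left h 3
    nlinarith [Nat.zero_le ((a + b) ^ 3)]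
  exact (add_le_cubeLog_of_cube_le (by omega) this).trans (cubeLog_mul_le a b)

lemma cubeLog_add_add_two_le {a b : ℕ} (ha : 3 ≤ a) (hb : 3 ≤ b) (hab : 10 ≤ a + b) :
    cubeLog (a + b) + 2 ≤ cubeLog a + cubeLog b := by
  have h : 21 * (a + b) ≤ 10 * (a * b) := by nlinarith
  have : 3 ^ 2 * (a + b) ^ 3 ≤ (a * b) ^ 3 := by
    have := Nat.pow_le_pow_left h 3
    nlinarith [Nat.zero_le ((a + b) ^ 3)]
  exact (add_le_cubeLog_of_cube_le (by omega) this).trans (cubeLog_mul_le a b)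

lemma cubeLog_three_pow_add_one {k : ℕ} (hk : 1 ≤ k) : cubeLog (3 ^ k + 1) = 3 * k + 1 := by
  have h3 : 3 ≤ 3 ^ k := Nat.le_self_pow (by omega) 3
  apply le_antisymm
  · rw [← cubeLog_three_pow k]
    exact cubeLog_le_add_of_cube_le (by nlinarith [sq_nonneg (3 ^ k)])
  · rw [Nat.succ_le_iff, lt_cubeLog_iff, pow_mul']
    exact Nat.pow_lt_pow_left (by omega) (by norm_num)

lemma cubeLog_three_pow_add_two_le {k : ℕ} (hk : 2 ≤ k) :
    cubeLog (3 ^ k + 2) ≤ cubeLog (3 ^ k + 1) := by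
  have h9 : 9 ≤ 3 ^ k := by simpa using Nat.pow_le_pow_right (n := 3) (by norm_num) hk
  rw [cubeLog_three_pow_add_one (by omega), ← cubeLog_three_pow k]
  exact cubeLog_le_add_of_cube_le (by nlinarith [sq_nonneg (3 ^ k)])

lemma cubeLog_three_pow_mul_succ_le {m : ℕ} (hm : 1 ≤ m) (h : cubeLog (m + 1) ≤ cubeLog m)
    (σ : ℕ) : cubeLog (3 ^ σ * m + 1) ≤ cubeLog (3 ^ σ * m) := by
  induction σ with
  | zero => simpa using h
  | succ σ ih =>
    have h3 := cubeLog_three_pow_mul (Nat.mul_pos (by positivity) hm : 1 ≤ 3 ^ σ * m) 1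
    rw [pow_one] at h3
    rw [pow_succ', mul_assoc, h3]
    have : (3 * (3 ^ σ * m) + 1) ^ 3 ≤ 3 ^ 3 * (3 ^ σ * m + 1) ^ 3 := by
      rw [← mul_pow]; exact Nat.pow_le_pow_left (by omega) 3
    have := cubeLog_le_add_of_cube_le this
    omega

lemma cubeLog_mul_three_pow_add_one_le {m : ℕ} (hm : 1 ≤ m) (j : ℕ) :
    cubeLog (m * (3 ^ (j + 4) + 1)) ≤ 3 * j + cubeLog (82 * m) := by
  rw [← cubeLog_three_pow_mul (by omega)]
  apply cubeLog_mono
  -- `3 ^ (j + 4) + 1 = 81 * 3 ^ j + 1 ≤ 82 * 3 ^ j`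
  have : m ≤ 3 ^ j * m := Nat.le_mul_of_pos_left m (by positivity)
  rw [pow_add]
  nlinarith

/-- Every power of `3` dividing `n` divides `3 ^ Nat.log 3 n ≤ n`, which keeps this form cheap to
evaluate by `decide`. -/
def threeFreePart (n : ℕ) : ℕ := n / n.gcd (3 ^ Nat.log 3 n)

lemma one_le_of_not_three_dvd {n : ℕ} (h : ¬ 3 ∣ n) : 1 ≤ n :=
  Nat.pos_of_ne_zero fun h0 => h (h0 ▸ dvd_zero 3)

lemma threeFreePart_le (n : ℕ) : threeFreePart n ≤ n := Nat.div_le_self _ _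

lemma threeFreePart_three_pow_mul_of_not_dvd {c : ℕ} (hc : ¬ 3 ∣ c) (k : ℕ) :
    threeFreePart (3 ^ k * c) = c := by
  have hc0 := one_le_of_not_three_dvd hc
  have hk : k ≤ Nat.log 3 (3 ^ k * c) :=
    Nat.le_log_of_pow_le (by norm_num) (Nat.le_mul_of_pos_right _ hc0)
  have hcop : Nat.Coprime c (3 ^ (Nat.log 3 (3 ^ k * c) - k)) :=
    Nat.Coprime.pow_right _ ((Nat.Prime.coprime_iff_not_dvd Nat.prime_three).2 hc).symm
  unfold threeFreePart
  rw [← Nat.add_sub_cancel' hk, pow_add, Nat.gcd_mul_left,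
    hcop.gcd_eq_one, mul_one, Nat.mul_div_cancel_left _ (by positivity)]

lemma threeFreePart_of_not_dvd {c : ℕ} (hc : ¬ 3 ∣ c) : threeFreePart c = c := by
  simpa using threeFreePart_three_pow_mul_of_not_dvd hc 0

lemma exists_eq_three_pow_mul_threeFreePart {n : ℕ} (hn : n ≠ 0) :
    ∃ k, n = 3 ^ k * threeFreePart n ∧ ¬ 3 ∣ threeFreePart n := by
  obtain ⟨k, c, hc, rfl⟩ := Nat.exists_eq_pow_mul_and_not_dvd hn 3 (by norm_num)
  rw [threeFreePart_three_pow_mul_of_not_dvd hc]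
  exact ⟨k, rfl, hc⟩

lemma threeFreePart_three_pow_mul {n : ℕ} (hn : n ≠ 0) (k : ℕ) :
    threeFreePart (3 ^ k * n) = threeFreePart n := by
  obtain ⟨j, hj, h3⟩ := exists_eq_three_pow_mul_threeFreePart hn
  rw [hj, ← mul_assoc, ← pow_add, threeFreePart_three_pow_mul_of_not_dvd h3,
    threeFreePart_three_pow_mul_of_not_dvd h3]

def tightNumbers : List ℕ := [1, 2, 4, 5, 7, 8, 10, 13, 14, 16, 19, 20, 28, 32, 40, 64, 128, 256, 512]

/-- Apart from `1`, the `3`-free `n < 1100` with `cpx n = cubeLog n` are exactly the tight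
numbers. -/
def IsTight (m : ℕ) : Prop := m ∈ tightNumbers ∨ ∃ j, m = 3 ^ (j + 4) + 1

instance : DecidablePred IsTight := fun m =>
  decidable_of_iff (m ∈ tightNumbers ∨ (82 ≤ m ∧ 3 ^ Nat.log 3 (m - 1) = m - 1)) <| by
    refine or_congr_right ⟨fun ⟨hm, hpow⟩ => ⟨Nat.log 3 (m - 1) - 4, ?_⟩, ?_⟩
    · have : 4 ≤ Nat.log 3 (m - 1) := Nat.le_log_of_pow_le (by norm_num) (by norm_num; omega)
      rw [Nat.sub_add_cancel this]
      omega
    · rintro ⟨j, rfl⟩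
      have : 81 ≤ 3 ^ (j + 4) := by rw [pow_add]; exact Nat.le_mul_of_pos_left 81 (by positivity)
      exact ⟨by omega, by simp [Nat.log_pow]⟩

/-- The `3`-free `n < 107` with `cpx n = cubeLog n + 2`. -/
def excessTwoNumbers : List ℕ := [23, 47, 53, 59, 67, 71, 77, 79, 89, 94, 101, 103, 106]

def excess (s : ℕ) : ℕ := if s ∈ excessTwoNumbers then 2 else if IsTight s then 0 else 1

def cpxLowerBound (n : ℕ) : ℕ := cubeLog n + excess (threeFreePart n)

lemma not_isTight_of_mem_excessTwoNumbers {s : ℕ} (hs : s ∈ excessTwoNumbers) : ¬ IsTight s := by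
  revert s; decide

lemma excess_le_two (s : ℕ) : excess s ≤ 2 := by
  unfold excess; split_ifs <;> omega

lemma excess_eq_zero_or_one_or_two (s : ℕ) : excess s = 0 ∨ excess s = 1 ∨ excess s = 2 := by
  have := excess_le_two s
  omega

lemma excess_eq_zero_iff {s : ℕ} : excess s = 0 ↔ IsTight s := by
  unfold excess
  split_ifs with h2 h0
  · exact iff_of_false not_false (not_isTight_of_mem_excessTwoNumbers h2)
  · exact iff_of_true rfl h0
  · exact iff_of_false not_false h0

lemma excess_eq_two_iff {s : ℕ} : excess s = 2 ↔ s ∈ excessTwoNumbers := by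
  unfold excess; split_ifs <;> simp_all

lemma IsTight.not_three_dvd {m : ℕ} (hm : IsTight m) : ¬ 3 ∣ m := by
  rcases hm with hm | ⟨j, rfl⟩
  · revert m; decide
  · rw [pow_succ, Nat.dvd_add_right (Dvd.intro_left _ rfl)]; decide

lemma isTight_of_lt_eleven {s : ℕ} (hs : s < 11) (h3 : ¬ 3 ∣ s) : IsTight s := by
  revert s; decide

lemma twenty_three_le_of_mem_excessTwoNumbers {s : ℕ} (hs : s ∈ excessTwoNumbers) : 23 ≤ s := by
  revert s; decide

lemma cubeLog_pred_of_mem_excessTwoNumbers {s : ℕ} (hs : s ∈ excessTwoNumbers) :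
    cubeLog (s - 1) = cubeLog s := by
  revert s; decide

lemma cubeLog_add_one_le_cpxLowerBound_pred {s : ℕ} (hs : s ∈ excessTwoNumbers) :
    cubeLog s + 1 ≤ cpxLowerBound (s - 1) := by
  revert s; decide

lemma cubeLog_le_cpxLowerBound_sub_two {s : ℕ} (hs : s ∈ excessTwoNumbers) :
    cubeLog s ≤ cpxLowerBound (s - 2) := by
  revert s; decide

lemma threeFreePart_succ_not_mem_excessTwoNumbers {u : ℕ} (hu : u ∈ tightNumbers) :
    threeFreePart (u + 1) ∉ excessTwoNumbers := by
  revert u; decide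

lemma excess_threeFreePart_three_pow_add_one (σ : ℕ) :
    excess (threeFreePart (3 ^ σ + 1)) = 0 := by
  obtain hσ | ⟨j, rfl⟩ : σ < 4 ∨ ∃ j, σ = j + 4 := by
    rcases Nat.lt_or_ge σ 4 with h | h
    · exact .inl h
    · exact .inr ⟨σ - 4, by omega⟩
  · interval_cases σ <;> decide
  · have ht : IsTight (3 ^ (j + 4) + 1) := .inr ⟨j, rfl⟩
    rw [threeFreePart_of_not_dvd ht.not_three_dvd, excess_eq_zero_iff]
    exact ht

lemma excess_threeFreePart_succ_eq_zero_or_cubeLog_succ_le {x σ : ℕ} (hx : x ∈ tightNumbers)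
    (hσ : σ < 3) : excess (threeFreePart (3 ^ σ * x + 1)) = 0 ∨
      cubeLog (3 ^ σ * x + 1) ≤ cubeLog (3 ^ σ * x) := by
  revert σ; revert x; decide

lemma cubeLog_twenty_seven_mul_succ_le {x : ℕ} (hx : x ∈ tightNumbers) (h1 : x ≠ 1) :
    cubeLog (27 * x + 1) ≤ cubeLog (27 * x) := by
  revert x; decide

lemma cubeLog_succ_le_of_isTight {x : ℕ} (hx : IsTight x) (σ : ℕ)
    (h : excess (threeFreePart (3 ^ σ * x + 1)) ≠ 0) :
    cubeLog (3 ^ σ * x + 1) ≤ cubeLog (3 ^ σ * x) := by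
  have hx1 := one_le_of_not_three_dvd hx.not_three_dvd
  rcases hx with hx | ⟨j, rfl⟩
  · by_cases h1 : x = 1
    · subst h1
      rw [mul_one] at h
      exact absurd (excess_threeFreePart_three_pow_add_one σ) h
    rcases Nat.lt_or_ge σ 3 with hσ | hσ
    · exact (excess_threeFreePart_succ_eq_zero_or_cubeLog_succ_le hx hσ).resolve_left h
    · obtain ⟨τ, rfl⟩ : ∃ τ, σ = τ + 3 := ⟨σ - 3, by omega⟩
      have := cubeLog_three_pow_mul_succ_le (by omega) (cubeLog_twenty_seven_mul_succ_le hx h1) τ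
      rwa [pow_add, mul_assoc]
  · exact cubeLog_three_pow_mul_succ_le (by omega) (cubeLog_three_pow_add_two_le (by omega)) σ

lemma cubeLog_succ_le_cpxLowerBound {n : ℕ} (hn : 2 ≤ n)
    (h : excess (threeFreePart (n + 1)) ≠ 0) : cubeLog (n + 1) ≤ cpxLowerBound n := by
  obtain ⟨σ, hσ, -⟩ := exists_eq_three_pow_mul_threeFreePart (n := n) (by omega)
  by_cases hx : IsTight (threeFreePart n)
  · have := cubeLog_succ_le_of_isTight hx σ (hσ ▸ h)
    rw [← hσ] at this
    exact this.trans (Nat.le_add_right _ _)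
  · have := excess_eq_zero_iff.not.2 hx
    have := cubeLog_succ_le hn
    unfold cpxLowerBound
    omega

lemma cubeLog_le_cubeLog_three_pow_mul_sub {s τ w : ℕ} (hs : s ∈ excessTwoNumbers) (hτ : 1 ≤ τ)
    (hw : w ≤ 3) : cubeLog (3 ^ τ * s) ≤ cubeLog (3 ^ τ * s - w) := by
  have h23 := twenty_three_le_of_mem_excessTwoNumbers hs
  have h3 : 3 ≤ 3 ^ τ := Nat.le_self_pow (by omega) 3
  rw [cubeLog_three_pow_mul (by omega), ← cubeLog_pred_of_mem_excessTwoNumbers hs,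
    ← cubeLog_three_pow_mul (by omega)]
  apply cubeLog_mono
  have : 3 ^ τ * (s - 1) + 3 ^ τ = 3 ^ τ * s := by
    rw [← mul_add_one, Nat.sub_add_cancel (by omega)]
  omega

lemma cpxLowerBound_succ_le {n : ℕ} (hn : 2 ≤ n) :
    cpxLowerBound (n + 1) ≤ cpxLowerBound n + 1 := by
  obtain ⟨τ, hτ, -⟩ := exists_eq_three_pow_mul_threeFreePart (n := n + 1) (by omega)
  have hHn : cubeLog n ≤ cpxLowerBound n := Nat.le_add_right _ _
  show cubeLog (n + 1) + excess (threeFreePart (n + 1)) ≤ _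
  obtain h0 | h1 | h2 := excess_eq_zero_or_one_or_two (threeFreePart (n + 1))
  · have := cubeLog_succ_le hn
    omega
  · have := cubeLog_succ_le_cpxLowerBound hn (by omega)
    omega
  · have hs := excess_eq_two_iff.1 h2
    rcases Nat.eq_zero_or_pos τ with rfl | hτ1
    · have := cubeLog_add_one_le_cpxLowerBound_pred hs
      rw [pow_zero, one_mul] at hτ
      rw [← hτ, Nat.add_sub_cancel] at this
      omega
    · have hH : cubeLog (n + 1) ≤ cubeLog n := by
        simpa [← hτ] using cubeLog_le_cubeLog_three_pow_mul_sub (w := 1) hs hτ1 (by norm_num)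
      have h3 : 3 ∣ n + 1 := hτ ▸ Dvd.dvd.mul_right (dvd_pow_self 3 (by omega)) _
      have hn3 : ¬ 3 ∣ n := by omega
      have hnt : ¬ IsTight n := by
        rintro (hl | ⟨j, rfl⟩)
        · exact threeFreePart_succ_not_mem_excessTwoNumbers hl hs
        · have : 3 ∣ 3 ^ (j + 4) := dvd_pow_self 3 (by omega)
          omega
      have := excess_eq_zero_iff.not.2 hnt
      rw [← threeFreePart_of_not_dvd hn3] at this
      unfold cpxLowerBound
      omega

lemma excess_le_one_of_lt {s : ℕ} (hs : s < 23) : excess s ≤ 1 := by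
  have := excess_le_two s
  have : excess s ≠ 2 := fun h =>
    absurd (twenty_three_le_of_mem_excessTwoNumbers (excess_eq_two_iff.1 h)) (by omega)
  omega

lemma cpxLowerBound_add_two_le {n : ℕ} (hn : 2 ≤ n) :
    cpxLowerBound (n + 2) ≤ cpxLowerBound n + 2 := by
  obtain ⟨τ, hτ, h3⟩ := exists_eq_three_pow_mul_threeFreePart (n := n + 2) (by omega)
  have hHn : cubeLog n ≤ cpxLowerBound n := Nat.le_add_right _ _
  show cubeLog (n + 2) + excess (threeFreePart (n + 2)) ≤ _
  obtain h0 | h1 | h2 := excess_eq_zero_or_one_or_two (threeFreePart (n + 2))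
  · have := cubeLog_add_two_le hn
    omega
  · have h11 : 11 ≤ threeFreePart (n + 2) := by
      by_contra hlt
      have := excess_eq_zero_iff.2 (isTight_of_lt_eleven (by omega) h3)
      omega
    have := threeFreePart_le (n + 2)
    have := cubeLog_add_two_le_succ (n := n) (by omega)
    omega
  · have hs := excess_eq_two_iff.1 h2
    rcases Nat.eq_zero_or_pos τ with rfl | hτ1
    · have := cubeLog_le_cpxLowerBound_sub_two hs
      rw [pow_zero, one_mul] at hτ
      rw [← hτ, Nat.add_sub_cancel] at this
      omega
    · have : cubeLog (n + 2) ≤ cubeLog n := by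
        simpa [← hτ] using cubeLog_le_cubeLog_three_pow_mul_sub (w := 2) hs hτ1 (by norm_num)
      omega

lemma cpxLowerBound_add_le {a b : ℕ} (ha : 3 ≤ a) (hb : 3 ≤ b) :
    cpxLowerBound (a + b) ≤ cpxLowerBound a + cpxLowerBound b := by
  have hHa : cubeLog a ≤ cpxLowerBound a := Nat.le_add_right _ _
  have hHb : cubeLog b ≤ cpxLowerBound b := Nat.le_add_right _ _
  show cubeLog (a + b) + excess (threeFreePart (a + b)) ≤ _
  by_cases hab : 10 ≤ a + b
  · have := cubeLog_add_add_two_le ha hb hab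
    have := excess_le_two (threeFreePart (a + b))
    omega
  · have := cubeLog_add_add_one_le ha hb
    have := excess_le_one_of_lt ((threeFreePart_le (a + b)).trans_lt (by omega : a + b < 23))
    omega

lemma cpxLowerBound_add_le_max {a b : ℕ} (ha : 1 ≤ a) (hb : 1 ≤ b) :
    cpxLowerBound (a + b) ≤ max (cpxLowerBound a) 1 + max (cpxLowerBound b) 1 := by
  wlog hab : a ≤ b generalizing a b
  · rw [add_comm, add_comm (max _ _)]
    exact this hb ha (by omega)
  have hb' := le_max_left (cpxLowerBound b) 1
  obtain rfl | rfl | ha3 : a = 1 ∨ a = 2 ∨ 3 ≤ a := by omega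
  · obtain rfl | hb2 : b = 1 ∨ 2 ≤ b := by omega
    · decide
    · rw [add_comm]
      have := cpxLowerBound_succ_le hb2
      have := le_max_right (cpxLowerBound 1) 1
      omega
  · rw [add_comm]
    have := cpxLowerBound_add_two_le (n := b) (by omega)
    have : max (cpxLowerBound 2) 1 = 2 := by decide
    omega
  · have := cpxLowerBound_add_le (b := b) ha3 (by omega)
    have := le_max_left (cpxLowerBound a) 1
    omega

lemma cpxLowerBound_of_not_dvd {s : ℕ} (hs : ¬ 3 ∣ s) : cpxLowerBound s = cubeLog s + excess s := by
  rw [cpxLowerBound, threeFreePart_of_not_dvd hs]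

lemma cpxLowerBound_three_pow_mul {n : ℕ} (hn : 1 ≤ n) (k : ℕ) :
    cpxLowerBound (3 ^ k * n) = 3 * k + cpxLowerBound n := by
  rw [cpxLowerBound, cpxLowerBound, cubeLog_three_pow_mul hn, threeFreePart_three_pow_mul (by omega)]
  ring

lemma cpxLowerBound_le_add_div_of_mem_excessTwoNumbers {s : ℕ} (hs : s ∈ excessTwoNumbers) :
    ∀ d ≤ s, d ∣ s → cpxLowerBound s ≤ cpxLowerBound d + cpxLowerBound (s / d) := by
  revert s; decide

lemma cpxLowerBound_mul_le_of_mem_tightNumbers {u v : ℕ} (hu : u ∈ tightNumbers)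
    (hv : v ∈ tightNumbers) : cpxLowerBound (u * v) ≤ cpxLowerBound u + cpxLowerBound v := by
  revert v; revert u; decide

lemma cubeLog_eighty_two_mul_le {u : ℕ} (hu : u ∈ tightNumbers) (h1 : u ≠ 1) :
    cubeLog (82 * u) ≤ cubeLog u + 12 := by
  revert u; decide

lemma cubeLog_mul_lt_of_isTight {u v : ℕ} (hu : IsTight u) (hv : IsTight v) (hu1 : u ≠ 1)
    (hv1 : v ≠ 1) (h : ¬ (u ∈ tightNumbers ∧ v ∈ tightNumbers)) :
    cubeLog (u * v) < cubeLog u + cubeLog v := by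
  have key : ∀ {u j : ℕ}, u ∈ tightNumbers → u ≠ 1 →
      cubeLog (u * (3 ^ (j + 4) + 1)) < cubeLog u + cubeLog (3 ^ (j + 4) + 1) := by
    intro u j hu hu1
    have := cubeLog_mul_three_pow_add_one_le
      (one_le_of_not_three_dvd (IsTight.not_three_dvd (.inl hu))) j
    have := cubeLog_eighty_two_mul_le hu hu1
    rw [cubeLog_three_pow_add_one (by omega)]
    omega
  rcases hu with hu | ⟨i, rfl⟩ <;> rcases hv with hv | ⟨j, rfl⟩
  · exact absurd ⟨hu, hv⟩ h
  · exact key hu hu1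
  · rw [mul_comm, Nat.add_comm (cubeLog _)]
    exact key hv hv1
  · have h1 := cubeLog_mul_three_pow_add_one_le (m := 3 ^ (i + 4) + 1) (Nat.le_add_left 1 _) j
    have h2 := cubeLog_mul_three_pow_add_one_le (m := 82) (by norm_num) i
    have h3 : cubeLog (82 * 82) = 25 := by decide
    rw [cubeLog_three_pow_add_one (by omega), cubeLog_three_pow_add_one (by omega)]
    omega

lemma cpxLowerBound_mul_le_of_not_dvd {u v : ℕ} (hu : ¬ 3 ∣ u) (hv : ¬ 3 ∣ v) :
    cpxLowerBound (u * v) ≤ cpxLowerBound u + cpxLowerBound v := by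
  have huv : ¬ 3 ∣ u * v := fun h => ((Nat.Prime.dvd_mul Nat.prime_three).1 h).elim hu hv
  have hu1 := one_le_of_not_three_dvd hu
  have hv1 := one_le_of_not_three_dvd hv
  have hFu := cpxLowerBound_of_not_dvd hu
  have hFv := cpxLowerBound_of_not_dvd hv
  have hFuv := cpxLowerBound_of_not_dvd huv
  have hH := cubeLog_mul_le u v
  by_cases hle : excess (u * v) ≤ excess u + excess v
  · omega
  obtain h2 | h1 : excess (u * v) = 2 ∨ excess (u * v) = 1 := by
    have := excess_eq_zero_or_one_or_two (u * v); omega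
  · have := cpxLowerBound_le_add_div_of_mem_excessTwoNumbers (excess_eq_two_iff.1 h2) u
      (Nat.le_mul_of_pos_right _ hv1) (Dvd.intro v rfl)
    rwa [Nat.mul_div_cancel_left _ hu1] at this
  · have hue : excess u = 0 := by omega
    have hve : excess v = 0 := by omega
    have hu2 : u ≠ 1 := by rintro rfl; rw [one_mul] at h1; omega
    have hv2 : v ≠ 1 := by rintro rfl; rw [mul_one] at h1; omega
    by_cases hl : u ∈ tightNumbers ∧ v ∈ tightNumbers
    · exact cpxLowerBound_mul_le_of_mem_tightNumbers hl.1 hl.2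
    · have := cubeLog_mul_lt_of_isTight (excess_eq_zero_iff.1 hue) (excess_eq_zero_iff.1 hve)
        hu2 hv2 hl
      omega

lemma cpxLowerBound_mul_le {a b : ℕ} (ha : 1 ≤ a) (hb : 1 ≤ b) :
    cpxLowerBound (a * b) ≤ cpxLowerBound a + cpxLowerBound b := by
  obtain ⟨i, hi, hu⟩ := exists_eq_three_pow_mul_threeFreePart (n := a) (by omega)
  obtain ⟨j, hj, hv⟩ := exists_eq_three_pow_mul_threeFreePart (n := b) (by omega)
  generalize threeFreePart a = u at hi hu
  generalize threeFreePart b = v at hj hv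
  subst hi hj
  have hu1 := one_le_of_not_three_dvd hu
  have hv1 := one_le_of_not_three_dvd hv
  rw [show 3 ^ i * u * (3 ^ j * v) = 3 ^ (i + j) * (u * v) by ring,
    cpxLowerBound_three_pow_mul (Nat.mul_pos hu1 hv1),
    cpxLowerBound_three_pow_mul hu1, cpxLowerBound_three_pow_mul hv1]
  have := cpxLowerBound_mul_le_of_not_dvd hu hv
  omega

lemma CanWrite.cpxLowerBound_le {n k : ℕ} (h : CanWrite n k) : cpxLowerBound n ≤ k := by
  induction h with
  | one => decide
  | add ha hb iha ihb =>
    exact (cpxLowerBound_add_le_max ha.one_le_left hb.one_le_left).trans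
      (add_le_add (max_le iha ha.one_le_right) (max_le ihb hb.one_le_right))
  | mul ha hb iha ihb =>
    exact (cpxLowerBound_mul_le ha.one_le_left hb.one_le_left).trans (add_le_add iha ihb)

lemma cpxLowerBound_le_cpx {n : ℕ} (hn : 1 ≤ n) : cpxLowerBound n ≤ cpx n :=
  (canWrite_cpx hn).cpxLowerBound_le

lemma stable_of_cpx_eq_cpxLowerBound {n : ℕ} (hn : 1 ≤ n) (h : cpx n = cpxLowerBound n) :
    Stable n := by
  intro k
  have h1 := cpxLowerBound_le_cpx (n := 3 ^ k * n) (Nat.mul_pos (by positivity) hn)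
  rw [cpxLowerBound_three_pow_mul hn] at h1
  have h2 := cpx_three_pow_mul_le hn k
  omega

set_option maxRecDepth 100000 in
lemma cpxLowerBound_eq_pred_add_one_or_mul {n : ℕ} (hn : n ≤ 106) (hn3 : 3 ≤ n) :
    cpxLowerBound n = cpxLowerBound (n - 1) + 1 ∨
      ∃ d < n, 2 ≤ d ∧ d ∣ n ∧ cpxLowerBound n = cpxLowerBound d + cpxLowerBound (n / d) := by
  revert n; decide

lemma cpx_le_cpxLowerBound {n : ℕ} (hn2 : 2 ≤ n) (hn : n ≤ 106) : cpx n ≤ cpxLowerBound n := by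
  induction n using Nat.strong_induction_on with
  | _ n ih =>
  rcases hn2.eq_or_lt with rfl | hn3
  · exact cpx_le (canWrite_self (by norm_num))
  rcases cpxLowerBound_eq_pred_add_one_or_mul hn hn3 with h | ⟨d, hdn, hd2, ⟨e, rfl⟩, h⟩
  · have := cpx_add_le (a := n - 1) (b := 1) (by omega) le_rfl
    rw [Nat.sub_add_cancel (by omega)] at this
    have := ih (n - 1) (by omega) (by omega) (by omega)
    have : cpx 1 ≤ 1 := cpx_le .one
    omega
  · have he : 2 ≤ e := by
      by_contra he
      interval_cases e <;> omega
    rw [Nat.mul_div_cancel_left _ (by omega)] at h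
    have := cpx_mul_le (a := d) (b := e) (by omega) (by omega)
    have := ih d (by nlinarith) hd2 (by omega)
    have := ih e (by nlinarith) he (by nlinarith)
    omega

lemma cpx_eq_cpxLowerBound {n : ℕ} (hn2 : 2 ≤ n) (hn : n ≤ 106) : cpx n = cpxLowerBound n :=
  le_antisymm (cpx_le_cpxLowerBound hn2 hn) (cpxLowerBound_le_cpx (by omega))

set_option maxRecDepth 100000 in
lemma sixteen_le_max_cpxLowerBound_add_max_cpxLowerBound_sub {a : ℕ} (ha : a ≤ 106) (ha1 : 1 ≤ a) :
    16 ≤ max (cpxLowerBound a) 1 + max (cpxLowerBound (107 - a)) 1 := by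
  revert a; decide

lemma sixteen_le_cpx_107 : 16 ≤ cpx 107 := by
  obtain ⟨a, b, ha, hb, hab | ⟨ha2, hb2, hab⟩, h⟩ := exists_cpx_eq_add_or_mul (n := 107) (by norm_num)
  · obtain rfl : b = 107 - a := by omega
    have := sixteen_le_max_cpxLowerBound_add_max_cpxLowerBound_sub (a := a) (by omega) ha
    have := max_le (cpxLowerBound_le_cpx ha) (one_le_cpx ha)
    have := max_le (cpxLowerBound_le_cpx hb) (one_le_cpx hb)
    omega
  · rcases (Nat.Prime.eq_one_or_self_of_dvd (by norm_num) a ⟨b, hab.symm⟩) with rfl | rfl <;> omega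

lemma cpx_321_le : cpx 321 ≤ 18 := by
  have h1 : cpx 321 ≤ cpx 1 + cpx 320 := cpx_add_le (a := 1) (b := 320) le_rfl (by norm_num)
  have h2 : cpx 320 ≤ cpx 64 + cpx 5 := cpx_mul_le (a := 64) (b := 5) (by norm_num) (by norm_num)
  have h64 := cpx_le_cpxLowerBound (n := 64) (by norm_num) (by norm_num)
  have h5 := cpx_le_cpxLowerBound (n := 5) (by norm_num) (by norm_num)
  have : cpxLowerBound 64 = 12 ∧ cpxLowerBound 5 = 5 := by decide
  have : cpx 1 ≤ 1 := cpx_le .one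
  omega

theorem smallest_unstable_is_107 :
    ¬ Stable 107 ∧ ∀ n : ℕ, 1 < n → n < 107 → Stable n := by
  refine ⟨fun h => ?_, fun n h1 h2 =>
    stable_of_cpx_eq_cpxLowerBound (by omega) (cpx_eq_cpxLowerBound h1 (by omega))⟩
  have h321 : cpx 321 = 3 + cpx 107 := by simpa using h 1
  have := cpx_321_le
  have := sixteen_le_cpx_107
  omega
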